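/- If a modulation set F ⊆ ℝ^d carrying probability measure μ can, for some c > 0, have probability mass c covered by at most σ^{-b} grid cubes of side σ (for all sufficiently small σ), and the source is uniform on [0,1]^m mapped into F, then partitioning the mass-c preimage into more than σ^{-b-ε·d} source sub-cubes of side σ^{(b+ε)/m'} forces (by pigeonhole) two sub-cubes whose images lie in the same σ-box; hence the decoder confuses source points at distance bounded below, and the mean squared distortion conditioned on this event is bounded below by a positive constant independent of σ. -/
import Mathlib


/-- The grid cube of side `σ` indexed by `z ∈ ℤ^d`. -/
def gridCube (d : ℕ) (σ : ℝ) (z : Fin d → ℤ) : Set (Fin d → ℝ) :=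
  {x | ∀ i, (z i : ℝ) * σ ≤ x i ∧ x i < ((z i : ℝ) + 1) * σ}

/-- key pigeonhole step: suppose the image of a source map
`φ : [0,1]^m → ℝ^d` has probability mass `c` covered by a collection `T` of at
most `σ^{-b}` grid cubes of side `σ`.  If more than `σ^{-b-ε}` disjoint source
sub-cubes of side `σ^{(b+ε)/m}` each contain a point mapped into the covered
region, then two of those image points share a single `σ`-box. -/
theorem pigeonhole_source_subcubes (m d : ℕ) (φ : (Fin m → ℝ) → (Fin d → ℝ))
    (b ε σ : ℝ) (hb : 0 < b) (hε : 0 < ε) (hσ : 0 < σ) (hσ1 : σ < 1)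
    (T : Finset (Fin d → ℤ)) (hT : (T.card : ℝ) ≤ σ ^ (-b))
    (C : Finset (Fin m → ℤ)) (hC : (C.card : ℝ) > σ ^ (-b - ε))
    (x : (Fin m → ℤ) → (Fin m → ℝ))
    (hx : ∀ z ∈ C, x z ∈ gridCube m (σ ^ ((b + ε) / m)) z ∩ Set.Icc 0 1)
    (hφx : ∀ z ∈ C, φ (x z) ∈ ⋃ t ∈ T, gridCube d σ t) :
    ∃ z ∈ C, ∃ w ∈ C, z ≠ w ∧ ∃ t ∈ T,
      φ (x z) ∈ gridCube d σ t ∧ φ (x w) ∈ gridCube d σ t := by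
  classical
  -- choose for each z ∈ C a cube t z ∈ T containing φ (x z)
  have hch : ∀ z ∈ C, ∃ t ∈ T, φ (x z) ∈ gridCube d σ t := by
    intro z hz
    have := hφx z hz
    simpa using this
  choose! f hfT hfmem using hch
  have hTC : T.card < C.card := by
    have h1 : σ ^ (-b) < σ ^ (-b - ε) := by
      apply Real.rpow_lt_rpow_of_exponent_gt hσ hσ1
      linarith
    have : (T.card : ℝ) < (C.card : ℝ) := lt_of_le_of_lt hT (lt_trans h1 hC)
    exact_mod_cast this
  obtain ⟨z, hz, w, hw, hzw, hfeq⟩ :=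
    Finset.exists_ne_map_eq_of_card_lt_of_maps_to hTC (fun z hz => hfT z hz)
  exact ⟨z, hz, w, hw, hzw, f z, hfT z hz, hfmem z hz, hfeq ▸ hfmem w hw⟩
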